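/- (Eroder theorem from positive total edge speed.) Let φ be a non-constant monotone local map on {0,1}^{Z^d} and suppose there exists a polar function L of dimension σ ≥ 2 with Σ_{s=1}^σ sup_{A ∈ 𝒜(φ)} inf_{i ∈ A} L_s(i) > 0. Then φ is an eroder: for every initial configuration X_0 with finitely many zeros, the deterministic cellular automaton X_{n+1}(i) = φ(θ_i X_n) satisfies X_n ≡ 1 for some finite n. -/
import Mathlib


abbrev Conf (d : ℕ) := (Fin d → ℤ) → Bool

def IsLocal {d : ℕ} (φ : Conf d → Bool) : Prop :=
  ∃ Δ : Finset (Fin d → ℤ), ∀ x y : Conf d, (∀ i ∈ Δ, x i = y i) → φ x = φ y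

def IsMonotoneMap {d : ℕ} (φ : Conf d → Bool) : Prop :=
  ∀ x y : Conf d, (∀ i, x i ≤ y i) → φ x ≤ φ y

def ind {d : ℕ} (A : Finset (Fin d → ℤ)) : Conf d := fun i => decide (i ∈ A)

/-- `𝒜(φ)`: minimal finite sets `A` with `φ(1_A) = 1`. -/
def minUp {d : ℕ} (φ : Conf d → Bool) : Set (Finset (Fin d → ℤ)) :=
  {A | φ (ind A) = true ∧ ∀ B ⊆ A, φ (ind B) = true → B = A}

/-- The coercion `ℤ^d → ℝ^d`. -/
def toR {d : ℕ} (i : Fin d → ℤ) : Fin d → ℝ := fun k => (i k : ℝ)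

/-- The translation operator `(θ_i y)(j) = y(i + j)`. -/
def shift {d : ℕ} (i : Fin d → ℤ) (y : Conf d) : Conf d := fun j => y (i + j)

/-- `δ_L(φ) := sup_{A ∈ 𝒜(φ)} inf_{i ∈ A} L(i)`. -/
noncomputable def speed {d : ℕ} (φ : Conf d → Bool) (L : (Fin d → ℝ) →ₗ[ℝ] ℝ) : ℝ :=
  sSup {r : ℝ | ∃ A ∈ minUp φ, r = sInf ((fun i => L (toR i)) '' (A : Set (Fin d → ℤ)))}

lemma toR_add {d : ℕ} (i j : Fin d → ℤ) : toR (i + j) = toR i + toR j := by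
  funext k
  simp [toR]

/-- Every set with `φ(1_S)=1` contains a minimal one. -/
lemma exists_minUp {d : ℕ} {φ : Conf d → Bool} (S : Finset (Fin d → ℤ))
    (hS : φ (ind S) = true) : ∃ A ∈ minUp φ, A ⊆ S := by
  classical
  set T := S.powerset.filter (fun B => φ (ind B) = true) with hT
  have hST : S ∈ T := by simp [hT, hS]
  obtain ⟨B, hB, hmin⟩ := T.exists_min_image Finset.card ⟨S, hST⟩
  simp only [hT, Finset.mem_filter, Finset.mem_powerset] at hB
  refine ⟨B, ⟨hB.2, ?_⟩, hB.1⟩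
  intro B' hB' hφ
  have hB'T : B' ∈ T := by
    simp only [hT, Finset.mem_filter, Finset.mem_powerset]
    exact ⟨hB'.trans hB.1, hφ⟩
  exact Finset.eq_of_subset_of_card_le hB' (hmin B' hB'T)

lemma minUp_subset {d : ℕ} {φ : Conf d → Bool} {Δ : Finset (Fin d → ℤ)}
    (hΔ : ∀ x y : Conf d, (∀ i ∈ Δ, x i = y i) → φ x = φ y)
    {A : Finset (Fin d → ℤ)} (hA : A ∈ minUp φ) : A ⊆ Δ := by
  have h1 : φ (ind (A ∩ Δ)) = φ (ind A) := by
    apply hΔ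
    intro i hi
    simp only [ind, decide_eq_decide, Finset.mem_inter]
    exact ⟨fun h => h.1, fun h => ⟨h, hi⟩⟩
  have h2 : A ∩ Δ = A := hA.2 (A ∩ Δ) Finset.inter_subset_left (h1.trans hA.1)
  intro i hi
  have : i ∈ A ∩ Δ := by rw [h2]; exact hi
  exact (Finset.mem_inter.1 this).2

/-- If there is a polar function with positive total edge speed
`∑_s sup_{A ∈ 𝒜(φ)} inf_{i ∈ A} L_s(i) > 0`, then `φ` is an eroder: any
configuration with finitely many zeros evolves to the all-one configuration. -/
theorem stmt9 {d σ : ℕ} (hσ : 2 ≤ σ) (φ : Conf d → Bool)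
    (hloc : IsLocal φ) (hmono : IsMonotoneMap φ) (hnc : ∃ x y : Conf d, φ x ≠ φ y)
    (L : Fin σ → ((Fin d → ℝ) →ₗ[ℝ] ℝ))
    (hpolar : ∀ z : Fin d → ℝ, ∑ s : Fin σ, L s z = 0)
    (hpos : 0 < ∑ s : Fin σ, speed φ (L s)) :
    ∀ X : ℕ → Conf d, (∀ n i, X (n + 1) i = φ (shift i (X n))) →
      {i | X 0 i = false}.Finite → ∃ n : ℕ, ∀ i, X n i = true := by
  classical
  intro X hX hfin
  by_contra hcon
  push_neg at hcon
  obtain ⟨Δ, hΔ⟩ := hloc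
  -- φ of the all-ones configuration is true
  have hone : φ (fun _ => true) = true := by
    by_contra h
    have h' : φ (fun _ => true) = false := by revert h; cases φ (fun _ => true) <;> simp
    obtain ⟨x, y, hxy⟩ := hnc
    have hx : φ x = false := by
      have := hmono x (fun _ => true) (fun i => Bool.le_true _)
      rw [h'] at this; revert this; cases φ x <;> simp
    have hy : φ y = false := by
      have := hmono y (fun _ => true) (fun i => Bool.le_true _)
      rw [h'] at this; revert this; cases φ y <;> simp
    exact hxy (hx.trans hy.symm)
  -- φ of the all-zeros configuration is false
  have hzero : φ (fun _ => false) = false := by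
    by_contra h
    have h' : φ (fun _ => false) = true := by revert h; cases φ (fun _ => false) <;> simp
    obtain ⟨x, y, hxy⟩ := hnc
    have hx : φ x = true := by
      have := hmono (fun _ => false) x (fun i => Bool.false_le _)
      rw [h'] at this; revert this; cases φ x <;> simp
    have hy : φ y = true := by
      have := hmono (fun _ => false) y (fun i => Bool.false_le _)
      rw [h'] at this; revert this; cases φ y <;> simp
    exact hxy (hx.trans hy.symm)
  -- if all of A is one in x, then φ x = true
  have phi_imp : ∀ (x : Conf d), ∀ A ∈ minUp φ, (∀ j ∈ A, x j = true) → φ x = true := by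
    intro x A hA hall
    have hle : ∀ i, ind A i ≤ x i := by
      intro i
      by_cases hi : i ∈ A
      · simp [ind, hi, hall i hi]
      · simp [ind, hi]
    have := hmono (ind A) x hle
    rw [hA.1] at this; revert this; cases φ x <;> simp
  -- minUp is nonempty
  have hUne : (minUp φ).Nonempty := by
    have hS : φ (ind Δ) = true := by
      have : φ (ind Δ) = φ (fun _ => true) := by
        apply hΔ; intro i hi; simp [ind, hi]
      rw [this, hone]
    obtain ⟨A, hA, _⟩ := exists_minUp Δ hS
    exact ⟨A, hA⟩
  -- every minimal set is nonempty
  have hAne : ∀ A ∈ minUp φ, A.Nonempty := by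
    intro A hA
    rcases Finset.eq_empty_or_nonempty A with h | h
    · exfalso
      have : φ (ind (∅ : Finset (Fin d → ℤ))) = true := h ▸ hA.1
      have h2 : ind (∅ : Finset (Fin d → ℤ)) = (fun _ => false) := by
        funext i; simp [ind]
      rw [h2, hzero] at this; exact Bool.false_ne_true this
    · exact h
  -- minUp is finite
  have hUfin : (minUp φ).Finite := by
    apply Set.Finite.subset (Δ.powerset.finite_toSet)
    intro A hA
    simpa [Finset.mem_powerset] using minUp_subset hΔ hA
  -- the speed is attained by some A_s
  have hAs : ∀ s : Fin σ, ∃ A ∈ minUp φ,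
      speed φ (L s) = sInf ((fun i => L s (toR i)) '' (A : Set (Fin d → ℤ))) := by
    intro s
    set g : Finset (Fin d → ℤ) → ℝ :=
      fun A => sInf ((fun i => L s (toR i)) '' (A : Set (Fin d → ℤ))) with hg
    have hset : {r : ℝ | ∃ A ∈ minUp φ, r = g A} = g '' minUp φ := by
      ext r; simp [eq_comm]
    have hne : {r : ℝ | ∃ A ∈ minUp φ, r = g A}.Nonempty := by
      obtain ⟨A, hA⟩ := hUne
      exact ⟨g A, A, hA, rfl⟩
    have hfin' : {r : ℝ | ∃ A ∈ minUp φ, r = g A}.Finite := by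
      rw [hset]; exact hUfin.image g
    have := hne.csSup_mem hfin'
    exact this
  choose As hAsU hAseq using hAs
  -- speed bound : speed ≤ L s (toR j) for j ∈ As s
  have hδle : ∀ s : Fin σ, ∀ j ∈ As s, speed φ (L s) ≤ L s (toR j) := by
    intro s j hj
    rw [hAseq s]
    apply csInf_le
    · exact (((As s).finite_toSet).image _).bddBelow
    · exact ⟨j, hj, rfl⟩
  -- zero sets
  set Z : ℕ → Set (Fin d → ℤ) := fun n => {i | X n i = false} with hZ
  have hZne : ∀ n, (Z n).Nonempty := by
    intro n
    obtain ⟨i, hi⟩ := hcon n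
    exact ⟨i, by simpa [hZ] using hi⟩
  -- the key one-step property
  have hstep : ∀ n (i : Fin d → ℤ), i ∈ Z (n + 1) → ∀ A ∈ minUp φ,
      ∃ j ∈ A, (i + j) ∈ Z n := by
    intro n i hi A hA
    by_contra h
    push_neg at h
    have hall : ∀ j ∈ A, shift i (X n) j = true := by
      intro j hj
      have := h j hj
      simp only [hZ, Set.mem_setOf_eq] at this
      simpa [shift] using Bool.not_eq_false _ |>.mp (by simpa using this) |>.symm ▸ rfl
    have := phi_imp (shift i (X n)) A hA hall
    rw [← hX n i] at this
    simp only [hZ, Set.mem_setOf_eq] at hi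
    rw [hi] at this
    exact Bool.false_ne_true this
  -- zero sets are finite
  obtain ⟨A₀, hA₀⟩ := hUne
  have hZfin : ∀ n, (Z n).Finite := by
    intro n
    induction n with
    | zero => exact hfin
    | succ n ih =>
      apply Set.Finite.subset (Set.Finite.biUnion (A₀.finite_toSet)
        (fun j _ => ih.image (fun v => v - j)))
      intro i hi
      obtain ⟨j, hj, hij⟩ := hstep n i hi A₀ hA₀
      refine Set.mem_biUnion hj ⟨i + j, hij, by simp⟩
  -- the supremum of L s over the zero set
  set u : ℕ → Fin σ → ℝ :=
    fun n s => sSup ((fun i => L s (toR i)) '' Z n) with hu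
  have hbdd : ∀ n s, BddAbove ((fun i => L s (toR i)) '' Z n) :=
    fun n s => ((hZfin n).image _).bddAbove
  have hle_u : ∀ n s (i : Fin d → ℤ), i ∈ Z n → L s (toR i) ≤ u n s := by
    intro n s i hi
    exact le_csSup (hbdd n s) ⟨i, hi, rfl⟩
  -- one-step decay
  have hdecay : ∀ n s, u (n + 1) s ≤ u n s - speed φ (L s) := by
    intro n s
    apply csSup_le ((hZne (n + 1)).image _)
    rintro r ⟨i, hi, rfl⟩
    obtain ⟨j, hj, hij⟩ := hstep n i hi (As s) (hAsU s)
    have h1 : L s (toR (i + j)) ≤ u n s := hle_u n s (i + j) hij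
    have h2 : speed φ (L s) ≤ L s (toR j) := hδle s j hj
    have h3 : L s (toR (i + j)) = L s (toR i) + L s (toR j) := by
      rw [toR_add, map_add]
    linarith
  -- iterated decay
  set δ : ℝ := ∑ s : Fin σ, speed φ (L s) with hδ
  have hiter : ∀ n, ∑ s : Fin σ, u n s ≤ (∑ s : Fin σ, u 0 s) - n * δ := by
    intro n
    induction n with
    | zero => simp
    | succ n ih =>
      have : ∑ s : Fin σ, u (n + 1) s ≤ ∑ s : Fin σ, (u n s - speed φ (L s)) :=
        Finset.sum_le_sum (fun s _ => hdecay n s)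
      rw [Finset.sum_sub_distrib] at this
      push_cast
      have : ∑ s : Fin σ, u (n+1) s ≤ (∑ s : Fin σ, u n s) - δ := by rw [hδ]; linarith
      linarith
  -- lower bound from polarity
  have hlow : ∀ n, 0 ≤ ∑ s : Fin σ, u n s := by
    intro n
    obtain ⟨i, hi⟩ := hZne n
    have : ∑ s : Fin σ, L s (toR i) ≤ ∑ s : Fin σ, u n s :=
      Finset.sum_le_sum (fun s _ => hle_u n s i hi)
    rw [hpolar (toR i)] at this
    exact this
  -- contradiction
  obtain ⟨n, hn⟩ := exists_nat_gt ((∑ s : Fin σ, u 0 s) / δ)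
  have hδpos : 0 < δ := hpos
  have h1 : (∑ s : Fin σ, u 0 s) < n * δ := by
    rw [div_lt_iff₀ hδpos] at hn
    linarith
  have := (hlow n).trans (hiter n)
  linarith
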